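/- arXiv:1507.00454 — 3 statements merged into one kernel-verified Lean document; each statement's English description precedes it below -/
import Mathlib

section
/- Let L be a Lie algebra, V ⊆ L an abelian Lie subalgebra, and π : L → V a linear projector (π² = π) satisfying the distributivity rule π[a,b] = π[πa, b] + π[a, πb] for all a, b ∈ L. Then for any Δ ∈ L, each n-ary higher derived bracket (a₁,…,aₙ) := π[…[[Δ,a₁],a₂],…,aₙ] is symmetric in its arguments, i.e. invariant under swapping any two adjacent arguments. -/
/-- Higher derived brackets are symmetric: swapping two adjacent arguments
(all taken from the abelian subalgebra `V`) leaves the derived bracket unchanged. -/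
theorem higher_derived_bracket_symmetric
    {k : Type*} [Field k] [CharZero k] {L : Type*} [LieRing L] [LieAlgebra k L]
    (V : LieSubalgebra k L)
    (habelian : ∀ v ∈ V, ∀ w ∈ V, ⁅v, w⁆ = 0)
    (π : L →ₗ[k] L)
    (hrange : ∀ x : L, π x ∈ V)
    (hproj : ∀ x : L, π (π x) = π x)
    (hdist : ∀ a b : L, π ⁅a, b⁆ = π ⁅π a, b⁆ + π ⁅a, π b⁆)
    (Δ : L) (l₁ l₂ : List L) (a b : L)
    (hl₁ : ∀ x ∈ l₁, x ∈ V) (hl₂ : ∀ x ∈ l₂, x ∈ V) (ha : a ∈ V) (hb : b ∈ V) :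
    π (List.foldl (fun x y => ⁅x, y⁆) Δ (l₁ ++ a :: b :: l₂)) =
      π (List.foldl (fun x y => ⁅x, y⁆) Δ (l₁ ++ b :: a :: l₂)) := by
  have h0 : ⁅a, b⁆ = 0 := habelian a ha b hb
  rw [List.foldl_append, List.foldl_append]
  simp only [List.foldl_cons]
  congr 2
  set x := List.foldl (fun x y => ⁅x, y⁆) Δ l₁
  rw [lie_lie x a b, h0, lie_zero, zero_sub, lie_skew]
end

section
/- Let A be a commutative unital associative algebra and Δ : A → A a linear operator. Define the derived operations by the recursion: Φ¹_Δ(a) = Δ(a) − Δ(1)·a, and Φ^{r+1}_Δ(a₁,…,aᵣ,a_{r+1}) = Φ^r_Δ(a₁,…,aᵣ·a_{r+1}) − Φ^r_Δ(a₁,…,aᵣ)·a_{r+1} − aᵣ·Φ^r_Δ(a₁,…,a_{r-1},a_{r+1}). Then the bracket (a₁,…,aᵣ)_Δ := [···[[Δ, L_{a₁}], L_{a₂}],···, L_{aᵣ}](1) (where L_a denotes multiplication by a in End(A)) coincides with Φ^r_Δ; in particular the (r+1)-th bracket measures the failure of the r-th bracket to be a derivation in its last argument. -/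
/-!
Write `D_l = [···[[Δ, L_{a₁}], L_{a₂}],···, L_{aᵣ}]` for `l = [a₁,…,aᵣ]`. Since
`[D, L_x](b) = D(x·b) − x·D(b)`, the expression `D_l(a) − a·D_l(1)` satisfies the same recursion
in `l` as `Φ^{r+1}(a₁,…,aᵣ,a)`, so the two agree. The bracket `(a₁,…,aᵣ,a)_Δ = [D_l, L_a](1)`
is exactly `D_l(a) − a·D_l(1)`.
-/

/-- The derived operations `Φ` of Koszul: `Phi Δ a rev` is `Φ^{r+1}(a₁,…,aᵣ,a)`
where `rev = [aᵣ,…,a₁]` is the list of earlier arguments in reverse order.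
`Phi Δ a [] = Δ a − Δ 1 · a` and
`Φ^{r+1}(a₁,…,aᵣ,a) = Φ^r(a₁,…,aᵣ·a) − Φ^r(a₁,…,aᵣ)·a − aᵣ·Φ^r(a₁,…,a_{r-1},a)`. -/
def Phi {R A : Type*} [CommRing R] [CommRing A] [Algebra R A]
    (Δ : A →ₗ[R] A) : A → List A → A
  | a, [] => Δ a - Δ 1 * a
  | a, x :: rest => Phi Δ (x * a) rest - Phi Δ x rest * a - x * Phi Δ a rest

section IterCommMulLeft

variable {R A : Type*} [CommRing R]

theorem lie_mulLeft_apply [NonUnitalNonAssocRing A] [Module R A] [SMulCommClass R A A]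
    [IsScalarTower R A A] (D : Module.End R A) (x b : A) :
    ⁅D, LinearMap.mulLeft R x⁆ b = D (x * b) - x * D b := by
  simp only [Ring.lie_def, LinearMap.sub_apply, Module.End.mul_apply, LinearMap.mulLeft_apply]

variable [CommRing A] [Algebra R A]

def iterCommMulLeft (Δ : Module.End R A) (l : List A) : Module.End R A :=
  l.foldl (fun D x => ⁅D, LinearMap.mulLeft R x⁆) Δ

theorem iterCommMulLeft_append_singleton (Δ : Module.End R A) (l : List A) (x : A) :
    iterCommMulLeft Δ (l ++ [x]) = ⁅iterCommMulLeft Δ l, LinearMap.mulLeft R x⁆ :=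
  List.foldl_concat _ _ _ _

theorem Phi_eq_iterCommMulLeft (Δ : Module.End R A) (rev : List A) (a : A) :
    Phi Δ a rev = iterCommMulLeft Δ rev.reverse a - a * iterCommMulLeft Δ rev.reverse 1 := by
  induction rev generalizing a with
  | nil => simp only [Phi, List.reverse_nil, iterCommMulLeft, List.foldl_nil, mul_comm]
  | cons x rest ih =>
    rw [Phi, ih, ih, ih, List.reverse_cons, iterCommMulLeft_append_singleton,
      lie_mulLeft_apply, lie_mulLeft_apply, mul_one]
    ring

end IterCommMulLeft

/-- The Koszul–Akman higher antibracket `(a₁,…,aᵣ,a)_Δ`, obtained by evaluating the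
iterated commutator `[···[[Δ,L_{a₁}],L_{a₂}],···,L_a]` at the unit, coincides with the
recursively defined derived operation `Φ`; in particular the `(r+1)`-th bracket measures
the failure of the `r`-th bracket to be a derivation in its last argument. -/
theorem antibracket_eq_Phi {R A : Type*} [CommRing R] [CommRing A] [Algebra R A]
    (Δ : Module.End R A) (l : List A) (a : A) :
    (List.foldl (fun (D : Module.End R A) (x : A) => ⁅D, LinearMap.mulLeft R x⁆) Δ
        (l ++ [a])) 1 = Phi Δ a l.reverse := by
  change iterCommMulLeft Δ (l ++ [a]) 1 = _
  rw [iterCommMulLeft_append_singleton, lie_mulLeft_apply, mul_one, Phi_eq_iterCommMulLeft,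
    List.reverse_reverse]
end

section
/- Let A be a commutative unital algebra and Δ ∈ End(A). If Δ is a differential operator of order at most k (in the Grothendieck sense: all (k+1)-fold iterated commutators [···[[Δ,L_{a₀}],L_{a₁}],···,L_{aₖ}] vanish), then the (k+1)-ary higher antibracket (a₁,…,a_{k+1})_Δ is identically zero; conversely, if all (k+1)-ary and higher antibrackets vanish and Δ(1)-corrections are included, then Δ is a differential operator of order at most k. -/
/-!
Forward: an iterated commutator of length at least `k + 1` starts with one of length exactly
`k + 1`, which is zero, and bracketing `0` further stays `0`. Backward: since
`[D, L_b](1) = D b - b * D 1`, an operator `D` with `D 1 = 0` and `[D, L_b](1) = 0` for all `b`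
vanishes; apply this to each `(k + 1)`-fold commutator, using antibrackets of arity `k + 1`
and `k + 2`.
-/

section IteratedCommutator

variable {R A : Type*} [CommRing R] [CommRing A] [Algebra R A]

theorem LinearMap.commutator_mulLeft_apply_one (D : Module.End R A) (b : A) :
    ⁅D, LinearMap.mulLeft R b⁆ 1 = D b - b * D 1 := by
  simp [LieRing.of_associative_ring_bracket]

theorem List.foldl_commutator_mulLeft_zero (l : List A) :
    List.foldl (fun (D : Module.End R A) (x : A) => ⁅D, LinearMap.mulLeft R x⁆) 0 l = 0 := by
  induction l with
  | nil => rfl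
  | cons a t ih => simpa only [List.foldl_cons, LieRing.of_associative_ring_bracket, zero_mul,
      mul_zero, sub_zero] using ih

theorem LinearMap.eq_zero_of_commutator_mulLeft_apply_one {D : Module.End R A} (h1 : D 1 = 0)
    (hb : ∀ b : A, ⁅D, LinearMap.mulLeft R b⁆ 1 = 0) : D = 0 := by
  ext b
  simpa [commutator_mulLeft_apply_one, h1] using hb b

end IteratedCommutator

/-- `Δ` is a differential operator of Grothendieck order at most `k` (all `(k+1)`-fold
iterated commutators with multiplication operators vanish) if and only if all higher
antibrackets of arity at least `k+1` vanish identically. -/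
theorem order_le_iff_antibrackets_vanish {R A : Type*} [CommRing R] [CommRing A] [Algebra R A]
    (Δ : Module.End R A) (k : ℕ) :
    (∀ l : List A, l.length = k + 1 →
        List.foldl (fun (D : Module.End R A) (x : A) => ⁅D, LinearMap.mulLeft R x⁆) Δ l = 0) ↔
    (∀ l : List A, k + 1 ≤ l.length →
        (List.foldl (fun (D : Module.End R A) (x : A) => ⁅D, LinearMap.mulLeft R x⁆) Δ l) 1
          = 0) := by
  constructor
  · intro h l hl
    rw [← List.take_append_drop (k + 1) l, List.foldl_append, h _ (List.length_take_of_le hl),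
      List.foldl_commutator_mulLeft_zero, LinearMap.zero_apply]
  · intro h l hl
    refine LinearMap.eq_zero_of_commutator_mulLeft_apply_one (h l hl.ge) fun b => ?_
    simpa [List.foldl_append] using h (l ++ [b]) (by simp [hl])
end
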